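/- arXiv:math/9804112 — 2 statements merged into one kernel-verified Lean document; each statement's English description precedes it below -/
import Mathlib

section
/- Let E be a closed subset of the unit sphere S of C^n and suppose (E,d) ∈ Υ_s for some s < n, i.e. for all x ∈ E, 0 < R ≤ kR ≤ 1, the maximal number N(x,R,k) of R-separated points in B(x,kR) ∩ E satisfies N(x,R,k) ≤ C k^s. Then E satisfies Σ_s: there is C' so that σ(B(x,R) ∩ E_ε) ≤ C' R^s ε^{n-s} for all x ∈ S, R > 0, 0 < ε < R, where E_ε = {z ∈ S : d(z,E) < ε} and σ is normalized Lebesgue measure on S. -/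
/-!
Given `x`, `R ≤ 1/64` and `ε < R`, pick `p ∈ E` within `ε` of a point of `B(x, R) ∩ E_ε`. By the
quasi-triangle inequality `d(a, b) ≤ 4 (d(a, c) + d(c, b))`, every point of `E` within `ε` of
`B(x, R)` lies in `B(p, 64 R)`, so the `8ε`-balls around a maximal `ε`-separated subset of
`E ∩ B(p, 64 R)` cover `B(x, R) ∩ E_ε`. By `Υ_s` there are at most `C (64 R / ε) ^ s` of them, each
of measure `≲ ε ^ n`, which gives `≲ R ^ s ε ^ (n - s) = (R / ε) ^ s ε ^ n`. A ball with
`R > 1/64` is covered by boundedly many balls of radius `1/64`, and for `ε ≥ 1/64` the crude bound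
`σ(S) ≲ 1 ≲ ε ^ n` suffices. Both steps need `s ≥ 0`, which `Υ_s` at a single point forces.
-/

open MeasureTheory

noncomputable def dNI {n : ℕ} (x y : EuclideanSpace ℂ (Fin n)) : ℝ :=
  ‖(1 - (inner ℂ y x : ℂ))‖

/-- Nonisotropic distance from `z` to the set `E`. -/
noncomputable def dE {n : ℕ} (E : Set (EuclideanSpace ℂ (Fin n)))
    (z : EuclideanSpace ℂ (Fin n)) : ℝ :=
  sInf (dNI z '' E)

/-- The `d`-ball of center `x` and radius `r` inside the unit sphere. -/
def Sball {n : ℕ} (x : EuclideanSpace ℂ (Fin n)) (r : ℝ) :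
    Set (EuclideanSpace ℂ (Fin n)) :=
  {z | ‖z‖ = 1 ∧ dNI x z < r}

section NonisotropicDistance

variable {n : ℕ}

lemma dNI_nonneg (x y : EuclideanSpace ℂ (Fin n)) : 0 ≤ dNI x y :=
  norm_nonneg _

lemma dNI_self {x : EuclideanSpace ℂ (Fin n)} (hx : ‖x‖ = 1) : dNI x x = 0 := by
  simp [dNI, hx]

lemma dNI_comm (x y : EuclideanSpace ℂ (Fin n)) : dNI x y = dNI y x := by
  rw [dNI, dNI, ← Complex.norm_conj, map_sub, map_one, inner_conj_symm]

lemma norm_inner_le_one {x y : EuclideanSpace ℂ (Fin n)} (hx : ‖x‖ = 1) (hy : ‖y‖ = 1) :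
    ‖inner ℂ x y‖ ≤ 1 := by
  simpa [hx, hy] using norm_inner_le_norm (𝕜 := ℂ) x y

lemma dNI_le_two {x y : EuclideanSpace ℂ (Fin n)} (hx : ‖x‖ = 1) (hy : ‖y‖ = 1) :
    dNI x y ≤ 2 := by
  calc dNI x y ≤ ‖(1 : ℂ)‖ + ‖inner ℂ y x‖ := norm_sub_le _ _
    _ ≤ 2 := by rw [norm_one]; linarith [norm_inner_le_one hy hx]

lemma dNI_le_norm_sub {x y : EuclideanSpace ℂ (Fin n)} (hx : ‖x‖ = 1) :
    dNI x y ≤ ‖x - y‖ := by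
  have h : (1 : ℂ) - inner ℂ y x = inner ℂ (x - y) x := by
    rw [inner_sub_left, inner_self_eq_one_of_norm_eq_one hx]
  rw [dNI, h]
  exact (norm_inner_le_norm _ _).trans_eq (by rw [hx, mul_one])

lemma norm_sub_inner_smul_sq {v c : EuclideanSpace ℂ (Fin n)} (hv : ‖v‖ = 1) (hc : ‖c‖ = 1) :
    ‖v - inner ℂ c v • c‖ ^ 2 = 1 - ‖inner ℂ c v‖ ^ 2 := by
  have h := norm_sub_sq (𝕜 := ℂ) v (inner ℂ c v • c)
  rw [inner_smul_right, ← inner_conj_symm v c, Complex.mul_conj] at h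
  rw [h, hv, norm_smul, hc, mul_one]
  simp [Complex.sq_norm]
  ring

lemma norm_sub_inner_smul_sq_le_two_mul_dNI {a c : EuclideanSpace ℂ (Fin n)}
    (ha : ‖a‖ = 1) (hc : ‖c‖ = 1) : ‖a - inner ℂ c a • c‖ ^ 2 ≤ 2 * dNI a c := by
  have h1 : 1 - ‖inner ℂ c a‖ ≤ dNI a c := by
    simpa [dNI] using norm_sub_norm_le (1 : ℂ) (inner ℂ c a)
  rw [norm_sub_inner_smul_sq ha hc]
  nlinarith [norm_nonneg (inner ℂ c a), norm_inner_le_one hc ha]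

/-- Quasi-triangle inequality: decompose `a` and `b` along `c` and its orthogonal complement. -/
lemma dNI_le_four_mul_add {a b c : EuclideanSpace ℂ (Fin n)}
    (ha : ‖a‖ = 1) (hb : ‖b‖ = 1) (hc : ‖c‖ = 1) :
    dNI a b ≤ 4 * (dNI a c + dNI c b) := by
  set Pa := a - inner ℂ c a • c
  set Pb := b - inner ℂ c b • c
  set u : ℂ := 1 - inner ℂ b c
  set v : ℂ := 1 - inner ℂ c a
  have hdecomp : 1 - inner ℂ b a = (u + v - u * v) - inner ℂ Pb Pa := by
    simp only [Pa, Pb, u, v, inner_sub_left, inner_sub_right, inner_smul_left,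
      inner_smul_right, inner_self_eq_one_of_norm_eq_one hc, ← inner_conj_symm c b]
    ring
  have hu : ‖u‖ = dNI c b := rfl
  have hv : ‖v‖ = dNI a c := rfl
  have hu2 : ‖u‖ ≤ 2 := hu ▸ dNI_le_two hc hb
  have hPa := norm_sub_inner_smul_sq_le_two_mul_dNI ha hc
  have hPb := norm_sub_inner_smul_sq_le_two_mul_dNI hb hc
  rw [dNI_comm b c] at hPb
  have hPaPb : ‖Pb‖ * ‖Pa‖ ≤ ‖u‖ + ‖v‖ := by
    nlinarith [sq_nonneg (‖Pa‖ - ‖Pb‖)]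
  calc dNI a b ≤ ‖u‖ + ‖v‖ + ‖u‖ * ‖v‖ + ‖Pb‖ * ‖Pa‖ := by
        rw [dNI, hdecomp]
        refine (norm_sub_le _ _).trans (add_le_add ?_ (norm_inner_le_norm _ _))
        refine (norm_sub_le _ _).trans ?_
        rw [norm_mul]
        gcongr
        exact norm_add_le _ _
    _ ≤ 4 * (dNI a c + dNI c b) := by
        rw [← hu, ← hv]
        nlinarith [norm_nonneg u, norm_nonneg v]

lemma dNI_lt_of_lt_of_lt {a b c : EuclideanSpace ℂ (Fin n)}
    (ha : ‖a‖ = 1) (hb : ‖b‖ = 1) (hc : ‖c‖ = 1) {r r' : ℝ}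
    (hac : dNI a c < r) (hcb : dNI c b < r') : dNI a b < 4 * (r + r') := by
  linarith [dNI_le_four_mul_add ha hb hc]

end NonisotropicDistance

section Nets

variable {n : ℕ}

lemma exists_finset_sphere_subset_biUnion_Sball {r : ℝ} (hr : 0 < r) :
    ∃ F : Finset (EuclideanSpace ℂ (Fin n)), (∀ c ∈ F, ‖c‖ = 1) ∧
      Metric.sphere 0 1 ⊆ ⋃ c ∈ F, Sball c r := by
  obtain ⟨F, hF, hcov⟩ := (isCompact_sphere (0 : EuclideanSpace ℂ (Fin n)) 1).elim_nhds_subcover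
    (fun c => Metric.ball c r) (fun c _ => Metric.ball_mem_nhds c hr)
  refine ⟨F, fun c hc => by simpa using hF c hc, fun z hz => ?_⟩
  obtain ⟨c, hcF, hzc⟩ := Set.mem_iUnion₂.1 (hcov hz)
  have hc : ‖c‖ = 1 := by simpa using hF c hcF
  refine Set.mem_iUnion₂.2 ⟨c, hcF, by simpa using hz, ?_⟩
  calc dNI c z ≤ ‖c - z‖ := dNI_le_norm_sub hc
    _ < r := by rwa [← dist_eq_norm, dist_comm]

lemma finite_of_pairwise_le_dNI {A : Set (EuclideanSpace ℂ (Fin n))} {ρ : ℝ} (hρ : 0 < ρ)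
    (hA : A ⊆ Metric.sphere 0 1) (hsep : A.Pairwise fun p q => ρ ≤ dNI p q) : A.Finite := by
  obtain ⟨F, hF, hcov⟩ := exists_finset_sphere_subset_biUnion_Sball (n := n) (r := ρ / 8)
    (by positivity)
  have hnear : ∀ a ∈ A, ∃ c ∈ F, dNI c a < ρ / 8 := fun a ha => by
    obtain ⟨c, hcF, -, hca⟩ := Set.mem_iUnion₂.1 (hcov (hA ha))
    exact ⟨c, hcF, hca⟩
  choose! f hfF hf using hnear
  refine F.finite_toSet.of_injOn (fun a ha => hfF a ha) fun a ha b hb hab => ?_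
  by_contra hne
  have hunit : ∀ p ∈ A, ‖p‖ = 1 := fun p hp => by simpa using hA hp
  have hab : dNI a b < 4 * (ρ / 8 + ρ / 8) :=
    dNI_lt_of_lt_of_lt (hunit a ha) (hunit b hb) (hF _ (hfF a ha))
      (by rw [dNI_comm]; exact hf a ha) (hab ▸ hf b hb)
  linarith [hsep ha hb hne]

lemma exists_finset_pairwise_le_dNI_net {A : Set (EuclideanSpace ℂ (Fin n))}
    (hA : A ⊆ Metric.sphere 0 1) {ρ : ℝ} (hρ : 0 < ρ) :
    ∃ T : Finset (EuclideanSpace ℂ (Fin n)), ↑T ⊆ A ∧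
      (T : Set (EuclideanSpace ℂ (Fin n))).Pairwise (fun p q => ρ ≤ dNI p q) ∧
      ∀ a ∈ A, ∃ t ∈ T, dNI t a < ρ := by
  classical
  obtain ⟨M, hM⟩ := zorn_subset {B | B ⊆ A ∧ B.Pairwise fun p q => ρ ≤ dNI p q}
    fun c hc hchain => ⟨⋃₀ c, ⟨Set.sUnion_subset fun B hB => (hc hB).1,
      (Set.pairwise_sUnion hchain.directedOn).2 fun B hB => (hc hB).2⟩,
      fun _ => Set.subset_sUnion_of_mem⟩
  have hMfin := finite_of_pairwise_le_dNI hρ (hM.prop.1.trans hA) hM.prop.2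
  refine ⟨hMfin.toFinset, by simpa using hM.prop.1, by simpa using hM.prop.2, fun a ha => ?_⟩
  by_contra! hfar
  have ha1 : ‖a‖ = 1 := by simpa using hA ha
  have haM : a ∈ M := hM.mem_of_prop_insert ⟨Set.insert_subset ha hM.prop.1,
    hM.prop.2.insert fun b hb _ => ⟨by rw [dNI_comm]; exact hfar b (by simpa using hb),
      hfar b (by simpa using hb)⟩⟩
  have := hfar a (by simpa using haM)
  rw [dNI_self ha1] at this
  linarith

end Nets

/-- `(E, d) ∈ Υ_s` with constant `C`: `N(x, R, k) ≤ C k ^ s` for `x ∈ E` and `0 < R ≤ k R ≤ 1`. -/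
def IsUpsilon {n : ℕ} (E : Set (EuclideanSpace ℂ (Fin n))) (s C : ℝ) : Prop :=
  ∀ x ∈ E, ∀ (R k : ℝ), 0 < R → 1 ≤ k → k * R ≤ 1 →
    ∀ T : Finset (EuclideanSpace ℂ (Fin n)), ↑T ⊆ {z ∈ E | dNI x z < k * R} →
      (∀ p ∈ T, ∀ q ∈ T, p ≠ q → R ≤ dNI p q) → (T.card : ℝ) ≤ C * k ^ s

namespace IsUpsilon

open Filter Topology

variable {n : ℕ} {E : Set (EuclideanSpace ℂ (Fin n))} {s C : ℝ}

lemma one_le_mul_rpow (h : IsUpsilon E s C) (hES : E ⊆ Metric.sphere 0 1) {x} (hx : x ∈ E)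
    {k : ℝ} (hk : 1 ≤ k) : 1 ≤ C * k ^ s := by
  have hk0 : k ≠ 0 := (one_pos.trans_le hk).ne'
  have hx1 : ‖x‖ = 1 := by simpa using hES hx
  simpa using h x hx k⁻¹ k (by positivity) hk (mul_inv_cancel₀ hk0).le {x}
    (by simp [hx, dNI_self hx1, mul_inv_cancel₀ hk0]) (by simp)

lemma one_le (h : IsUpsilon E s C) (hES : E ⊆ Metric.sphere 0 1) (hne : E.Nonempty) : 1 ≤ C := by
  obtain ⟨x, hx⟩ := hne
  simpa using h.one_le_mul_rpow hES hx le_rfl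

lemma nonneg (h : IsUpsilon E s C) (hES : E ⊆ Metric.sphere 0 1) (hne : E.Nonempty) : 0 ≤ s := by
  obtain ⟨x, hx⟩ := hne
  by_contra! hs
  have hlim : Tendsto (fun k : ℝ => C * k ^ s) atTop (𝓝 0) := by
    simpa using (tendsto_rpow_neg_atTop (neg_pos.2 hs)).const_mul C
  obtain ⟨k, hk1, hk⟩ :=
    ((eventually_ge_atTop 1).and (hlim.eventually (gt_mem_nhds one_pos))).exists
  linarith [h.one_le_mul_rpow hES hx hk1]

lemma exists_net (h : IsUpsilon E s C) (hES : E ⊆ Metric.sphere 0 1) {p} (hp : p ∈ E)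
    {ρ r : ℝ} (hρ : 0 < ρ) (hρr : ρ ≤ r) (hr : r ≤ 1) :
    ∃ T : Finset (EuclideanSpace ℂ (Fin n)), ↑T ⊆ E ∧ (T.card : ℝ) ≤ C * (r / ρ) ^ s ∧
      ∀ q ∈ E, dNI p q < r → ∃ t ∈ T, dNI t q < ρ := by
  obtain ⟨T, hTA, hsep, hnet⟩ :=
    exists_finset_pairwise_le_dNI_net (A := {z ∈ E | dNI p z < r}) (fun z hz => hES hz.1) hρ
  have hk : r / ρ * ρ = r := div_mul_cancel₀ r hρ.ne'
  exact ⟨T, fun t ht => (hTA ht).1,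
    h p hp ρ (r / ρ) hρ ((one_le_div hρ).2 hρr) (hk.symm ▸ hr) T (hk.symm ▸ hTA) hsep,
    fun q hq hpq => hnet q ⟨hq, hpq⟩⟩

end IsUpsilon

lemma exists_dNI_lt_of_dE_lt {n : ℕ} {E : Set (EuclideanSpace ℂ (Fin n))} (hne : E.Nonempty)
    {z : EuclideanSpace ℂ (Fin n)} {ε : ℝ} (h : dE E z < ε) : ∃ p ∈ E, dNI p z < ε := by
  have hbdd : BddBelow (dNI z '' E) := ⟨0, by rintro _ ⟨p, -, rfl⟩; exact dNI_nonneg z p⟩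
  obtain ⟨_, ⟨p, hpE, rfl⟩, hp⟩ := (csInf_lt_iff hbdd (hne.image _)).1 h
  exact ⟨p, hpE, by rwa [dNI_comm]⟩

lemma rpow_mul_rpow_sub_eq_div_rpow_mul_rpow {R ε : ℝ} (hR : 0 ≤ R) (hε : 0 < ε) (s t : ℝ) :
    R ^ s * ε ^ (t - s) = (R / ε) ^ s * ε ^ t := by
  rw [Real.div_rpow hR hε.le, Real.rpow_sub hε]
  field_simp

section Measure

variable {n : ℕ} [MeasurableSpace (EuclideanSpace ℂ (Fin n))]
  {σ : Measure (EuclideanSpace ℂ (Fin n))} {C₀ : ℝ}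

lemma measure_biUnion_Sball_le
    (hσup : ∀ x : EuclideanSpace ℂ (Fin n), ‖x‖ = 1 → ∀ r : ℝ, 0 < r →
      σ (Sball x r) ≤ ENNReal.ofReal (C₀ * r ^ (n : ℝ)))
    {T : Finset (EuclideanSpace ℂ (Fin n))} (hT : ∀ t ∈ T, ‖t‖ = 1) {r : ℝ} (hr : 0 < r) :
    σ (⋃ t ∈ T, Sball t r) ≤ ENNReal.ofReal (T.card * (C₀ * r ^ (n : ℝ))) := by
  calc σ (⋃ t ∈ T, Sball t r) ≤ ∑ t ∈ T, σ (Sball t r) := measure_biUnion_finset_le T _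
    _ ≤ ∑ _t ∈ T, ENNReal.ofReal (C₀ * r ^ (n : ℝ)) :=
        Finset.sum_le_sum fun t ht => hσup t (hT t ht) r hr
    _ = ENNReal.ofReal (T.card * (C₀ * r ^ (n : ℝ))) := by
        rw [Finset.sum_const, nsmul_eq_mul, ENNReal.ofReal_mul (Nat.cast_nonneg _),
          ENNReal.ofReal_natCast]

lemma measure_Sball_le_of_inv_le {s : ℝ} (hs : 0 ≤ s) (hC₀ : 0 ≤ C₀)
    (hσup : ∀ x : EuclideanSpace ℂ (Fin n), ‖x‖ = 1 → ∀ r : ℝ, 0 < r →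
      σ (Sball x r) ≤ ENNReal.ofReal (C₀ * r ^ (n : ℝ)))
    {x : EuclideanSpace ℂ (Fin n)} (hx : ‖x‖ = 1) {R ε : ℝ} (hε : 64⁻¹ ≤ ε) (hεR : ε < R) :
    σ (Sball x R) ≤ ENNReal.ofReal (C₀ * 192 ^ (n : ℝ) * ((R / ε) ^ s * ε ^ (n : ℝ))) := by
  have h3 : (3 : ℝ) ^ (n : ℝ) = 192 ^ (n : ℝ) * (64⁻¹) ^ (n : ℝ) := by
    rw [← Real.mul_rpow (by norm_num) (by norm_num)]
    norm_num
  have hε' : (64⁻¹ : ℝ) ^ (n : ℝ) ≤ (R / ε) ^ s * ε ^ (n : ℝ) :=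
    calc (64⁻¹ : ℝ) ^ (n : ℝ) ≤ ε ^ (n : ℝ) := Real.rpow_le_rpow (by norm_num) hε n.cast_nonneg
      _ ≤ (R / ε) ^ s * ε ^ (n : ℝ) := le_mul_of_one_le_left (by positivity)
          (Real.one_le_rpow ((one_le_div (by positivity)).2 hεR.le) hs)
  calc σ (Sball x R)
      ≤ σ (Sball x 3) :=
        measure_mono fun z hz => ⟨hz.1, (dNI_le_two hx hz.1).trans_lt (by norm_num)⟩
    _ ≤ ENNReal.ofReal (C₀ * 3 ^ (n : ℝ)) := hσup x hx 3 (by norm_num)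
    _ ≤ ENNReal.ofReal (C₀ * 192 ^ (n : ℝ) * ((R / ε) ^ s * ε ^ (n : ℝ))) := by
        rw [h3, ← mul_assoc]
        gcongr

lemma measure_le_sum_measure_Sball_inter {F : Finset (EuclideanSpace ℂ (Fin n))} {r : ℝ}
    (hF : Metric.sphere 0 1 ⊆ ⋃ c ∈ F, Sball c r) {A : Set (EuclideanSpace ℂ (Fin n))}
    (hA : A ⊆ Metric.sphere 0 1) : σ A ≤ ∑ c ∈ F, σ (Sball c r ∩ A) := by
  refine (measure_mono fun a ha => ?_).trans (measure_biUnion_finset_le F _)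
  obtain ⟨c, hcF, hac⟩ := Set.mem_iUnion₂.1 (hF (hA ha))
  exact Set.mem_iUnion₂.2 ⟨c, hcF, hac, ha⟩

lemma IsUpsilon.measure_Sball_inter_le {E : Set (EuclideanSpace ℂ (Fin n))} {s C : ℝ}
    (h : IsUpsilon E s C) (hES : E ⊆ Metric.sphere 0 1) (hne : E.Nonempty) (hC₀ : 0 ≤ C₀)
    (hσup : ∀ x : EuclideanSpace ℂ (Fin n), ‖x‖ = 1 → ∀ r : ℝ, 0 < r →
      σ (Sball x r) ≤ ENNReal.ofReal (C₀ * r ^ (n : ℝ)))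
    {x : EuclideanSpace ℂ (Fin n)} (hx : ‖x‖ = 1) {R ε : ℝ} (hε : 0 < ε) (hεR : ε < R)
    (hR : R ≤ 64⁻¹) :
    σ (Sball x R ∩ {z | ‖z‖ = 1 ∧ dE E z < ε}) ≤
      ENNReal.ofReal (C * 64 ^ s * C₀ * 8 ^ (n : ℝ) * ((R / ε) ^ s * ε ^ (n : ℝ))) := by
  rcases (Sball x R ∩ {z | ‖z‖ = 1 ∧ dE E z < ε}).eq_empty_or_nonempty with
    hempty | ⟨z, ⟨hz1, hxz⟩, -, hzE⟩
  · simp [hempty]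
  have hunit : ∀ q ∈ E, ‖q‖ = 1 := fun q hq => by simpa using hES hq
  obtain ⟨p, hpE, hpz⟩ := exists_dNI_lt_of_dE_lt hne hzE
  obtain ⟨T, hTE, hTcard, hTnet⟩ := h.exists_net hES hpE hε (r := 64 * R) (by linarith)
    (by linarith)
  have hcover : Sball x R ∩ {z | ‖z‖ = 1 ∧ dE E z < ε} ⊆ ⋃ t ∈ T, Sball t (8 * ε) := by
    rintro w ⟨⟨hw1, hxw⟩, -, hwE⟩
    obtain ⟨q, hqE, hqw⟩ := exists_dNI_lt_of_dE_lt hne hwE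
    have hpx : dNI p x < 4 * (ε + R) :=
      dNI_lt_of_lt_of_lt (hunit p hpE) hx hz1 hpz (by rwa [dNI_comm])
    have hxq : dNI x q < 4 * (R + ε) :=
      dNI_lt_of_lt_of_lt hx (hunit q hqE) hw1 hxw (by rwa [dNI_comm])
    have hpq : dNI p q < 64 * R := by
      linarith [dNI_lt_of_lt_of_lt (hunit p hpE) (hunit q hqE) hx hpx hxq]
    obtain ⟨t, htT, htq⟩ := hTnet q hqE hpq
    refine Set.mem_iUnion₂.2 ⟨t, htT, hw1, ?_⟩
    linarith [dNI_lt_of_lt_of_lt (hunit t (hTE htT)) hw1 (hunit q hqE) htq hqw]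
  calc σ (Sball x R ∩ {z | ‖z‖ = 1 ∧ dE E z < ε})
      ≤ σ (⋃ t ∈ T, Sball t (8 * ε)) := measure_mono hcover
    _ ≤ ENNReal.ofReal (T.card * (C₀ * (8 * ε) ^ (n : ℝ))) :=
        measure_biUnion_Sball_le hσup (fun t ht => hunit t (hTE ht)) (by positivity)
    _ ≤ ENNReal.ofReal (C * (64 * R / ε) ^ s * (C₀ * (8 * ε) ^ (n : ℝ))) := by gcongr
    _ = _ := by
        rw [mul_div_assoc, Real.mul_rpow (by norm_num) (div_pos (hε.trans hεR) hε).le,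
          Real.mul_rpow (by norm_num) hε.le]
        ring_nf

lemma IsUpsilon.exists_measure_Sball_inter_le {E : Set (EuclideanSpace ℂ (Fin n))} {s C : ℝ}
    (h : IsUpsilon E s C) (hES : E ⊆ Metric.sphere 0 1) (hne : E.Nonempty) (hC₀ : 0 ≤ C₀)
    (hσup : ∀ x : EuclideanSpace ℂ (Fin n), ‖x‖ = 1 → ∀ r : ℝ, 0 < r →
      σ (Sball x r) ≤ ENNReal.ofReal (C₀ * r ^ (n : ℝ))) :
    ∃ K ≥ 0, ∀ x : EuclideanSpace ℂ (Fin n), ‖x‖ = 1 → ∀ R ε : ℝ, 0 < ε → ε < R → ε < 64⁻¹ →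
      σ (Sball x R ∩ {z | ‖z‖ = 1 ∧ dE E z < ε}) ≤
        ENNReal.ofReal (K * ((R / ε) ^ s * ε ^ (n : ℝ))) := by
  obtain ⟨F, hF1, hFcov⟩ :=
    exists_finset_sphere_subset_biUnion_Sball (n := n) (r := 64⁻¹) (by norm_num)
  have hs := h.nonneg hES hne
  have hC := h.one_le hES hne
  set K := C * 64 ^ s * C₀ * 8 ^ (n : ℝ)
  have hK : 0 ≤ K := by positivity
  refine ⟨(F.card + 1) * K, by positivity, fun x hx R ε hε hεR hε64 => ?_⟩
  have hΦ : 0 ≤ (R / ε) ^ s * ε ^ (n : ℝ) := by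
    have := hε.trans hεR
    positivity
  rcases le_or_gt R 64⁻¹ with hR | hR
  · refine (h.measure_Sball_inter_le hES hne hC₀ hσup hx hε hεR hR).trans
      (ENNReal.ofReal_le_ofReal (mul_le_mul_of_nonneg_right ?_ hΦ))
    nlinarith
  calc σ (Sball x R ∩ {z | ‖z‖ = 1 ∧ dE E z < ε})
      ≤ ∑ c ∈ F, σ (Sball c 64⁻¹ ∩ (Sball x R ∩ {z | ‖z‖ = 1 ∧ dE E z < ε})) :=
        measure_le_sum_measure_Sball_inter hFcov fun z hz => by simpa using hz.1.1
    _ ≤ ∑ _c ∈ F, ENNReal.ofReal (K * ((R / ε) ^ s * ε ^ (n : ℝ))) := by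
        refine Finset.sum_le_sum fun c hc => (measure_mono
          (Set.inter_subset_inter_right _ Set.inter_subset_right)).trans
          ((h.measure_Sball_inter_le hES hne hC₀ hσup (hF1 c hc) hε hε64 le_rfl).trans
          (ENNReal.ofReal_le_ofReal ?_))
        gcongr
    _ = ENNReal.ofReal (F.card * (K * ((R / ε) ^ s * ε ^ (n : ℝ)))) := by
        rw [Finset.sum_const, nsmul_eq_mul, ENNReal.ofReal_mul (Nat.cast_nonneg _),
          ENNReal.ofReal_natCast]
    _ ≤ ENNReal.ofReal ((F.card + 1) * K * ((R / ε) ^ s * ε ^ (n : ℝ))) :=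
        ENNReal.ofReal_le_ofReal (by nlinarith)

end Measure

theorem upsilon_implies_sigma_general (n : ℕ)
    [MeasurableSpace (EuclideanSpace ℂ (Fin n))]
    (E : Set (EuclideanSpace ℂ (Fin n)))
    (hES : E ⊆ Metric.sphere 0 1) (hEne : E.Nonempty)
    (σ : Measure (EuclideanSpace ℂ (Fin n)))
    -- the normalized surface measure satisfies σ(B(x,r)) ≈ r^n :
    (C₀ : ℝ) (hC₀ : 0 < C₀)
    (hσup : ∀ x : EuclideanSpace ℂ (Fin n), ‖x‖ = 1 → ∀ r : ℝ, 0 < r →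
      σ (Sball x r) ≤ ENNReal.ofReal (C₀ * r ^ (n : ℝ)))
    (s C : ℝ)
    -- (E,d) ∈ Υ_s :
    (hUps : ∀ x ∈ E, ∀ (R k : ℝ), 0 < R → 1 ≤ k → k * R ≤ 1 →
      ∀ T : Finset (EuclideanSpace ℂ (Fin n)),
        (↑T ⊆ {z ∈ E | dNI x z < k * R}) →
        (∀ p ∈ T, ∀ q ∈ T, p ≠ q → R ≤ dNI p q) →
        (T.card : ℝ) ≤ C * k ^ s) :
    -- conclusion: E satisfies Σ_s
    ∃ C' > 0, ∀ x : EuclideanSpace ℂ (Fin n), ‖x‖ = 1 → ∀ R ε : ℝ, 0 < ε → ε < R →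
      σ (Sball x R ∩ {z | ‖z‖ = 1 ∧ dE E z < ε}) ≤
        ENNReal.ofReal (C' * R ^ s * ε ^ ((n : ℝ) - s)) := by
  have hs : 0 ≤ s := IsUpsilon.nonneg hUps hES hEne
  obtain ⟨K, hK, hsmall⟩ :=
    IsUpsilon.exists_measure_Sball_inter_le hUps hES hEne hC₀.le hσup
  refine ⟨K + C₀ * 192 ^ (n : ℝ), by positivity, fun x hx R ε hε hεR => ?_⟩
  have hR : 0 < R := hε.trans hεR
  rw [mul_assoc, rpow_mul_rpow_sub_eq_div_rpow_mul_rpow hR.le hε]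
  have hΦ : 0 ≤ (R / ε) ^ s * ε ^ (n : ℝ) := by positivity
  rcases lt_or_ge ε 64⁻¹ with hε64 | hε64
  · refine (hsmall x hx R ε hε hεR hε64).trans (ENNReal.ofReal_le_ofReal ?_)
    gcongr
    linarith [(by positivity : 0 ≤ C₀ * 192 ^ (n : ℝ))]
  · refine (measure_mono Set.inter_subset_left).trans
      ((measure_Sball_le_of_inv_le hs hC₀.le hσup hx hε64 hεR).trans
      (ENNReal.ofReal_le_ofReal ?_))
    gcongr
    linarith

theorem upsilon_implies_sigma (n : ℕ)
    [MeasurableSpace (EuclideanSpace ℂ (Fin n))]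
    [BorelSpace (EuclideanSpace ℂ (Fin n))]
    (E : Set (EuclideanSpace ℂ (Fin n)))
    (hEclosed : IsClosed E) (hES : E ⊆ Metric.sphere 0 1) (hEne : E.Nonempty)
    (σ : Measure (EuclideanSpace ℂ (Fin n)))
    -- the normalized surface measure satisfies σ(B(x,r)) ≈ r^n :
    (c₀ C₀ : ℝ) (hc₀ : 0 < c₀) (hC₀ : 0 < C₀)
    (hσlow : ∀ x : EuclideanSpace ℂ (Fin n), ‖x‖ = 1 → ∀ r : ℝ, 0 < r → r ≤ 1 →
      ENNReal.ofReal (c₀ * r ^ (n : ℝ)) ≤ σ (Sball x r))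
    (hσup : ∀ x : EuclideanSpace ℂ (Fin n), ‖x‖ = 1 → ∀ r : ℝ, 0 < r →
      σ (Sball x r) ≤ ENNReal.ofReal (C₀ * r ^ (n : ℝ)))
    (s C : ℝ) (hs : s < n) (hC : 0 < C)
    -- (E,d) ∈ Υ_s :
    (hUps : ∀ x ∈ E, ∀ (R k : ℝ), 0 < R → 1 ≤ k → k * R ≤ 1 →
      ∀ T : Finset (EuclideanSpace ℂ (Fin n)),
        (↑T ⊆ {z ∈ E | dNI x z < k * R}) →
        (∀ p ∈ T, ∀ q ∈ T, p ≠ q → R ≤ dNI p q) →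
        (T.card : ℝ) ≤ C * k ^ s) :
    -- conclusion: E satisfies Σ_s
    ∃ C' > 0, ∀ x : EuclideanSpace ℂ (Fin n), ‖x‖ = 1 → ∀ R ε : ℝ, 0 < ε → ε < R →
      σ (Sball x R ∩ {z | ‖z‖ = 1 ∧ dE E z < ε}) ≤
        ENNReal.ofReal (C' * R ^ s * ε ^ ((n : ℝ) - s)) :=
  upsilon_implies_sigma_general n E hES hEne σ C₀ hC₀ hσup s C hUps
end

section
/- Let 0 < b < a. There is a constant C such that for any complex z with |z| < 1, ∫_0^1 (log(1/t))^{b-1} |1 - t z|^{-a} dt ≤ C |1 - z|^{b-a}. Moreover if b > a the integral is bounded by a constant depending only on a and b, uniformly in |z| < 1. -/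
/-!
On `(0, 1/2]` the factor `‖1 - t z‖ ^ (-a)` is at most `2 ^ a` and `log (1/t) ^ (b - 1)` is
integrable. On `(1/2, 1)` one has `log (1/t) ≍ 1 - t` and `‖1 - t z‖ ≥ max (1 - t) δ` with
`δ = ‖1 - z‖ / 2`, so after `s = 1 - t` the integral is dominated by
`∫₀¹ s ^ (b - 1) * max s δ ^ (-a) = δ ^ (b - a) / b + (1 - δ ^ (b - a)) / (b - a)`,
which is `O(δ ^ (b - a))` for `b < a` and `O(1)` for `a < b`.
-/

open MeasureTheory Set
open scoped Interval

section Geometry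

variable {z : ℂ} {t : ℝ}

lemma one_sub_le_norm_one_sub_ofReal_mul (hz : ‖z‖ ≤ 1) (ht : 0 ≤ t) :
    1 - t ≤ ‖1 - (t : ℂ) * z‖ := by
  have h : ‖(t : ℂ) * z‖ ≤ t := by
    rw [norm_mul, Complex.norm_of_nonneg ht]
    exact mul_le_of_le_one_right ht hz
  have := norm_sub_norm_le (1 : ℂ) ((t : ℂ) * z)
  rw [norm_one] at this
  linarith

lemma norm_one_sub_le_two_mul_norm_one_sub_ofReal_mul (hz : ‖z‖ ≤ 1) (ht0 : 0 ≤ t) (ht1 : t ≤ 1) :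
    ‖1 - z‖ ≤ 2 * ‖1 - (t : ℂ) * z‖ := by
  have h : ‖((1 - t : ℝ) : ℂ) * z‖ ≤ 1 - t := by
    rw [norm_mul, Complex.norm_of_nonneg (sub_nonneg.2 ht1)]
    exact mul_le_of_le_one_right (sub_nonneg.2 ht1) hz
  calc ‖1 - z‖ = ‖(1 - (t : ℂ) * z) - ((1 - t : ℝ) : ℂ) * z‖ := by push_cast; ring_nf
    _ ≤ ‖1 - (t : ℂ) * z‖ + (1 - t) := (norm_sub_le _ _).trans (by gcongr)
    _ ≤ 2 * ‖1 - (t : ℂ) * z‖ := by linarith [one_sub_le_norm_one_sub_ofReal_mul hz ht0]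

lemma half_norm_one_sub_mem_Ioc (hz : ‖z‖ < 1) : ‖1 - z‖ / 2 ∈ Ioc 0 1 := by
  have hne : 1 - z ≠ 0 := by
    rintro h
    rw [← sub_eq_zero.1 h, norm_one] at hz
    exact lt_irrefl 1 hz
  have := norm_sub_le (1 : ℂ) z
  rw [norm_one] at this
  exact ⟨by positivity, by linarith⟩

end Geometry

section Log

variable {t : ℝ}

lemma one_sub_le_log_one_div (ht : 0 < t) : 1 - t ≤ Real.log (1 / t) := by
  simpa [one_div] using Real.one_sub_inv_le_log_of_pos (one_div_pos.2 ht)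

lemma log_one_div_le_two_mul_one_sub (ht : 1 / 2 ≤ t) (ht1 : t ≤ 1) :
    Real.log (1 / t) ≤ 2 * (1 - t) := by
  have ht0 : 0 < t := by linarith
  calc Real.log (1 / t) ≤ 1 / t - 1 := Real.log_le_sub_one_of_pos (one_div_pos.2 ht0)
    _ = (1 - t) / t := by field_simp
    _ ≤ 2 * (1 - t) := by
      rw [div_le_iff₀ ht0]
      nlinarith [sub_nonneg.2 ht1]

lemma log_one_div_nonneg (ht0 : 0 ≤ t) (ht1 : t ≤ 1) : 0 ≤ Real.log (1 / t) := by
  rw [one_div, Real.log_inv, neg_nonneg]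
  exact Real.log_nonpos ht0 ht1

lemma rpow_le_two_rpow_abs_mul_rpow {x y : ℝ} (p : ℝ) (hx : 0 < x) (hxy : x ≤ y) (hy : y ≤ 2 * x) :
    y ^ p ≤ 2 ^ |p| * x ^ p := by
  rcases le_total 0 p with hp | hp
  · calc y ^ p ≤ (2 * x) ^ p := Real.rpow_le_rpow (hx.le.trans hxy) hy hp
      _ = 2 ^ |p| * x ^ p := by rw [abs_of_nonneg hp, Real.mul_rpow zero_le_two hx.le]
  · calc y ^ p ≤ x ^ p := Real.rpow_le_rpow_of_nonpos hx hxy hp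
      _ ≤ 2 ^ |p| * x ^ p :=
        le_mul_of_one_le_left (by positivity) (Real.one_le_rpow one_le_two (abs_nonneg p))

lemma log_one_div_rpow_le {p : ℝ} (hp : 0 < p) (ht0 : 0 < t) (ht1 : t ≤ 1) :
    Real.log (1 / t) ^ p ≤ (2 * p) ^ p * t ^ (-(1 / 2) : ℝ) := by
  have hε : 0 < 1 / (2 * p) := by positivity
  calc Real.log (1 / t) ^ p ≤ ((1 / t) ^ (1 / (2 * p)) / (1 / (2 * p))) ^ p :=
        Real.rpow_le_rpow (log_one_div_nonneg ht0.le ht1)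
          (Real.log_le_rpow_div (by positivity) hε) hp.le
    _ = (2 * p) ^ p * ((1 / t) ^ (1 / (2 * p))) ^ p := by
        rw [div_eq_mul_inv, inv_div, div_one, mul_comm,
          Real.mul_rpow (by positivity) (by positivity)]
    _ = (2 * p) ^ p * t ^ (-(1 / 2) : ℝ) := by
        rw [← Real.rpow_mul (by positivity), one_div t, Real.inv_rpow ht0.le,
          ← Real.rpow_neg ht0.le]
        field_simp

lemma intervalIntegrable_log_one_div_rpow {b : ℝ} (hb : 0 < b) :
    IntervalIntegrable (fun t => Real.log (1 / t) ^ (b - 1)) volume 0 1 := by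
  have of_le (g : ℝ → ℝ) (hg : IntervalIntegrable g volume 0 1)
      (hle : ∀ t ∈ Ioc (0 : ℝ) 1, Real.log (1 / t) ^ (b - 1) ≤ g t) :
      IntervalIntegrable (fun t => Real.log (1 / t) ^ (b - 1)) volume 0 1 :=
    hg.mono_fun' (by fun_prop : Measurable _).aestronglyMeasurable <|
      ae_restrict_of_forall_mem measurableSet_uIoc fun t ht => by
        rw [uIoc_of_le zero_le_one] at ht
        dsimp only
        rw [Real.norm_of_nonneg (Real.rpow_nonneg (log_one_div_nonneg ht.1.le ht.2) _)]
        exact hle t ht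
  rcases le_or_gt b 1 with hb1 | hb1
  · refine of_le (fun t => (1 - t) ^ (b - 1)) ?_ fun t ht => ?_
    · simpa using ((intervalIntegral.intervalIntegrable_rpow' (by linarith : -1 < b - 1)
        ).comp_sub_left 1 (a := 0) (b := 1)).symm
    rcases ht.2.eq_or_lt with rfl | ht1
    · simp
    exact Real.rpow_le_rpow_of_nonpos (by linarith) (one_sub_le_log_one_div ht.1) (by linarith)
  · have hg := (intervalIntegral.intervalIntegrable_rpow' (a := 0) (b := 1)
      (by norm_num : (-1 : ℝ) < -(1 / 2))).const_mul ((2 * (b - 1)) ^ (b - 1))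
    exact of_le _ hg fun t ht => log_one_div_rpow_le (by linarith) ht.1 ht.2

end Log

section Kernel

variable {a b δ : ℝ}

lemma intervalIntegrable_rpow_mul_max_rpow (hb : 0 < b) (hδ : 0 < δ) (u v : ℝ) :
    IntervalIntegrable (fun s => s ^ (b - 1) * max s δ ^ (-a)) volume u v :=
  (intervalIntegral.intervalIntegrable_rpow' (by linarith)).mul_continuousOn <|
    (continuous_id.max continuous_const).continuousOn.rpow_const fun s _ =>
      Or.inl (hδ.trans_le (le_max_right s δ)).ne'

lemma integral_rpow_mul_max_rpow (hb : 0 < b) (hab : a ≠ b) (hδ : 0 < δ) (hδ1 : δ ≤ 1) :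
    ∫ s in (0 : ℝ)..1, s ^ (b - 1) * max s δ ^ (-a) =
      δ ^ (b - a) / b + (1 - δ ^ (b - a)) / (b - a) := by
  have hφ := intervalIntegrable_rpow_mul_max_rpow (a := a) hb hδ
  rw [← intervalIntegral.integral_add_adjacent_intervals (hφ 0 δ) (hφ δ 1)]
  have hlow : ∫ s in (0 : ℝ)..δ, s ^ (b - 1) * max s δ ^ (-a) = δ ^ (b - a) / b := by
    rw [intervalIntegral.integral_congr (g := fun s => s ^ (b - 1) * δ ^ (-a)) fun s hs => by
        rw [uIcc_of_le hδ.le] at hs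
        simp only [max_eq_right hs.2],
      intervalIntegral.integral_mul_const, integral_rpow (Or.inl (by linarith)),
      Real.zero_rpow (by linarith), sub_zero, sub_add_cancel, sub_eq_add_neg,
      Real.rpow_add hδ]
    ring
  have hhigh : ∫ s in δ..1, s ^ (b - 1) * max s δ ^ (-a) = (1 - δ ^ (b - a)) / (b - a) := by
    rw [intervalIntegral.integral_congr (g := fun s => s ^ (b - a - 1)) fun s hs => by
        rw [uIcc_of_le hδ1] at hs
        simp only [max_eq_left hs.1, ← Real.rpow_add (hδ.trans_le hs.1)]
        ring_nf,
      integral_rpow (Or.inr ⟨by contrapose! hab; linarith, fun h => by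
        rw [uIcc_of_le hδ1] at h; linarith [h.1]⟩)]
    simp only [Real.one_rpow, sub_add_cancel]
  rw [hlow, hhigh]

lemma integral_rpow_mul_max_rpow_le_of_lt (hb : 0 < b) (hba : b < a) (hδ : 0 < δ) (hδ1 : δ ≤ 1) :
    ∫ s in (0 : ℝ)..1, s ^ (b - 1) * max s δ ^ (-a) ≤ (1 / b + 1 / (a - b)) * δ ^ (b - a) := by
  have hab : 0 < a - b := sub_pos.2 hba
  have hflip : (1 - δ ^ (b - a)) / (b - a) = (δ ^ (b - a) - 1) / (a - b) := by
    rw [← neg_sub (δ ^ (b - a)) 1, neg_div, ← div_neg, neg_sub]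
  rw [integral_rpow_mul_max_rpow hb hba.ne' hδ hδ1, hflip]
  calc δ ^ (b - a) / b + (δ ^ (b - a) - 1) / (a - b) ≤ δ ^ (b - a) / b + δ ^ (b - a) / (a - b) := by
        gcongr; linarith
    _ = _ := by ring

lemma integral_rpow_mul_max_rpow_le_of_gt (hb : 0 < b) (hab : a < b) (hδ : 0 < δ) (hδ1 : δ ≤ 1) :
    ∫ s in (0 : ℝ)..1, s ^ (b - 1) * max s δ ^ (-a) ≤ 1 / b + 1 / (b - a) := by
  rw [integral_rpow_mul_max_rpow hb hab.ne hδ hδ1]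
  have : 0 < b - a := sub_pos.2 hab
  have h1 : δ ^ (b - a) ≤ 1 := Real.rpow_le_one hδ.le hδ1 this.le
  have h0 : 0 ≤ δ ^ (b - a) := by positivity
  gcongr
  linarith

end Kernel

lemma rpow_log_one_div_mul_le {a b t : ℝ} {z : ℂ} (ha : 0 ≤ a) (hz : ‖z‖ < 1) (ht : t ∈ Ioo 0 1) :
    Real.log (1 / t) ^ (b - 1) * ‖1 - (t : ℂ) * z‖ ^ (-a) ≤
      2 ^ a * Real.log (1 / t) ^ (b - 1) +
        2 ^ |b - 1| * ((1 - t) ^ (b - 1) * max (1 - t) (‖1 - z‖ / 2) ^ (-a)) := by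
  obtain ⟨ht0, ht1⟩ := ht
  set L := Real.log (1 / t) ^ (b - 1)
  set N := max (1 - t) (‖1 - z‖ / 2) ^ (-a)
  have hL : 0 ≤ L := Real.rpow_nonneg (log_one_div_nonneg ht0.le ht1.le) _
  have hN : 0 ≤ N := Real.rpow_nonneg (le_max_of_le_left (by linarith)) _
  have hM : ‖1 - (t : ℂ) * z‖ ^ (-a) ≤ N := by
    refine Real.rpow_le_rpow_of_nonpos (lt_max_of_lt_left (by linarith)) (max_le ?_ ?_)
      (by linarith)
    · exact one_sub_le_norm_one_sub_ofReal_mul hz.le ht0.le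
    · linarith [norm_one_sub_le_two_mul_norm_one_sub_ofReal_mul hz.le ht0.le ht1.le]
  have h1t : 0 ≤ (1 - t) ^ (b - 1) := Real.rpow_nonneg (by linarith) _
  refine (mul_le_mul_of_nonneg_left hM hL).trans ?_
  rcases le_or_gt t (1 / 2) with hth | hth
  · have hN2 : N ≤ 2 ^ a := by
      rw [← inv_inv (2 : ℝ), Real.inv_rpow (by norm_num), ← Real.rpow_neg (by norm_num)]
      exact Real.rpow_le_rpow_of_nonpos (by norm_num) (le_max_of_le_left (by linarith))
        (by linarith)
    nlinarith [mul_nonneg (mul_nonneg (Real.rpow_nonneg zero_le_two |b - 1|) h1t) hN]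
  · have hK : L ≤ 2 ^ |b - 1| * (1 - t) ^ (b - 1) :=
      rpow_le_two_rpow_abs_mul_rpow _ (by linarith) (one_sub_le_log_one_div ht0)
        (log_one_div_le_two_mul_one_sub hth.le ht1.le)
    nlinarith [Real.rpow_nonneg zero_le_two a]

lemma integral_rpow_log_one_div_mul_le {a b : ℝ} {z : ℂ} (ha : 0 ≤ a) (hb : 0 < b) (hz : ‖z‖ < 1) :
    ∫ t in Ioo (0 : ℝ) 1, Real.log (1 / t) ^ (b - 1) * ‖1 - (t : ℂ) * z‖ ^ (-a) ≤
      2 ^ a * (∫ t in (0 : ℝ)..1, Real.log (1 / t) ^ (b - 1)) +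
        2 ^ |b - 1| * ∫ s in (0 : ℝ)..1, s ^ (b - 1) * max s (‖1 - z‖ / 2) ^ (-a) := by
  set δ := ‖1 - z‖ / 2
  have hL := (intervalIntegrable_log_one_div_rpow hb).1.mono_set Ioo_subset_Ioc_self
  have hφ : IntegrableOn (fun t => (1 - t) ^ (b - 1) * max (1 - t) δ ^ (-a)) (Ioo 0 1) := by
    have := ((intervalIntegrable_rpow_mul_max_rpow (a := a) hb (half_norm_one_sub_mem_Ioc hz).1
      0 1).comp_sub_left 1).symm
    simp only [sub_zero, sub_self] at this
    exact this.1.mono_set Ioo_subset_Ioc_self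
  calc ∫ t in Ioo (0 : ℝ) 1, Real.log (1 / t) ^ (b - 1) * ‖1 - (t : ℂ) * z‖ ^ (-a)
      ≤ ∫ t in Ioo (0 : ℝ) 1, (2 ^ a * Real.log (1 / t) ^ (b - 1) +
          2 ^ |b - 1| * ((1 - t) ^ (b - 1) * max (1 - t) δ ^ (-a))) :=
        integral_mono_of_nonneg
          (ae_restrict_of_forall_mem measurableSet_Ioo fun t ht => mul_nonneg
            (Real.rpow_nonneg (log_one_div_nonneg ht.1.le ht.2.le) _)
            (Real.rpow_nonneg (norm_nonneg _) _))
          ((hL.const_mul _).add (hφ.const_mul _))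
          (ae_restrict_of_forall_mem measurableSet_Ioo fun t ht => rpow_log_one_div_mul_le ha hz ht)
    _ = _ := by
      rw [integral_add (hL.const_mul _) (hφ.const_mul _), integral_const_mul, integral_const_mul,
        ← integral_Ioc_eq_integral_Ioo, ← integral_Ioc_eq_integral_Ioo,
        ← intervalIntegral.integral_of_le zero_le_one,
        ← intervalIntegral.integral_of_le zero_le_one,
        intervalIntegral.integral_comp_sub_left (fun s => s ^ (b - 1) * max s δ ^ (-a))]
      simp only [sub_self, sub_zero]

theorem lemashiti (a b : ℝ) (ha : 0 < a) (hb : 0 < b) :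
    (b < a →
      ∃ C > 0, ∀ z : ℂ, ‖z‖ < 1 →
        ∫ t in Set.Ioo (0 : ℝ) 1,
            (Real.log (1 / t)) ^ (b - 1) * ‖1 - (t : ℂ) * z‖ ^ (-a) ≤
          C * ‖1 - z‖ ^ (b - a)) ∧
    (a < b →
      ∃ C > 0, ∀ z : ℂ, ‖z‖ < 1 →
        ∫ t in Set.Ioo (0 : ℝ) 1,
            (Real.log (1 / t)) ^ (b - 1) * ‖1 - (t : ℂ) * z‖ ^ (-a) ≤
          C) := by
  set A := 2 ^ a * ∫ t in (0 : ℝ)..1, Real.log (1 / t) ^ (b - 1)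
  have hA : 0 ≤ A := mul_nonneg (by positivity) <| intervalIntegral.integral_nonneg
    zero_le_one fun t ht => Real.rpow_nonneg (log_one_div_nonneg ht.1 ht.2) _
  set K : ℝ := 2 ^ |b - 1|
  refine ⟨fun hba => ⟨(A + K * (1 / b + 1 / (a - b))) * 2 ^ (a - b), ?_, fun z hz => ?_⟩,
    fun hab => ⟨A + K * (1 / b + 1 / (b - a)), ?_, fun z hz => ?_⟩⟩
  · have : 0 < a - b := sub_pos.2 hba
    exact mul_pos (add_pos_of_nonneg_of_pos hA (by positivity)) (by positivity)
  · obtain ⟨hδ0, hδ1⟩ := half_norm_one_sub_mem_Ioc hz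
    have h1 : 1 ≤ (‖1 - z‖ / 2) ^ (b - a) :=
      Real.one_le_rpow_of_pos_of_le_one_of_nonpos hδ0 hδ1 (by linarith)
    calc _ ≤ A + K * ∫ s in (0 : ℝ)..1, s ^ (b - 1) * max s (‖1 - z‖ / 2) ^ (-a) :=
          integral_rpow_log_one_div_mul_le ha.le hb hz
      _ ≤ A * (‖1 - z‖ / 2) ^ (b - a) + K * ((1 / b + 1 / (a - b)) * (‖1 - z‖ / 2) ^ (b - a)) :=
          add_le_add (le_mul_of_one_le_right hA h1) <| by
            gcongr; exact integral_rpow_mul_max_rpow_le_of_lt hb hba hδ0 hδ1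
      _ = (A + K * (1 / b + 1 / (a - b))) * 2 ^ (a - b) * ‖1 - z‖ ^ (b - a) := by
          rw [Real.div_rpow (norm_nonneg _) zero_le_two, div_eq_mul_inv,
            ← Real.rpow_neg zero_le_two, neg_sub]
          ring
  · have : 0 < b - a := sub_pos.2 hab
    exact add_pos_of_nonneg_of_pos hA (by positivity)
  · obtain ⟨hδ0, hδ1⟩ := half_norm_one_sub_mem_Ioc hz
    calc _ ≤ A + K * ∫ s in (0 : ℝ)..1, s ^ (b - 1) * max s (‖1 - z‖ / 2) ^ (-a) :=
          integral_rpow_log_one_div_mul_le ha.le hb hz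
      _ ≤ A + K * (1 / b + 1 / (b - a)) := by
          gcongr; exact integral_rpow_mul_max_rpow_le_of_gt hb hab hδ0 hδ1
end
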